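/- arXiv:1711.08670 — 2 statements merged into one kernel-verified Lean document; each statement's English description precedes it below -/
import Mathlib

section
/- A transverse Markov trace on the tower of Hecke algebras with parameters α_n = τ_n(1) is multiplicative (i.e. τ_{n_1+n_2}(u_1 ⊗ u_2) = τ_{n_1}(u_1)τ_{n_2}(u_2)) if and only if α_n = α_1^n for all n ≥ 2. -/
noncomputable section

/-- Defining relations of the Hecke algebra with `n` generators
(the paper's `H_{n+1}`), over a commutative ring `C` with quadratic
parameter `z` (in the paper `z = q - q⁻¹`). -/
inductive HeckeRel (C : Type) [CommRing C] (z : C) (n : ℕ) :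
    FreeAlgebra C (Fin n) → FreeAlgebra C (Fin n) → Prop
  | comm (i j : Fin n) (h : (i : ℕ) + 2 ≤ (j : ℕ)) :
      HeckeRel C z n (FreeAlgebra.ι C i * FreeAlgebra.ι C j)
        (FreeAlgebra.ι C j * FreeAlgebra.ι C i)
  | braid (i j : Fin n) (h : (j : ℕ) = (i : ℕ) + 1) :
      HeckeRel C z n (FreeAlgebra.ι C i * FreeAlgebra.ι C j * FreeAlgebra.ι C i)
        (FreeAlgebra.ι C j * FreeAlgebra.ι C i * FreeAlgebra.ι C j)
  | quad (i : Fin n) :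
      HeckeRel C z n (FreeAlgebra.ι C i * FreeAlgebra.ι C i)
        (1 + z • FreeAlgebra.ι C i)

/-- The Hecke algebra with `n` generators `σ_1, …, σ_n` (the paper's `H_{n+1}`). -/
abbrev Hecke (C : Type) [CommRing C] (z : C) (n : ℕ) : Type :=
  RingQuot (HeckeRel C z n)

variable {C : Type} [CommRing C] {z : C} {n : ℕ}

/-- The generator `σ_{i+1}` of the Hecke algebra. -/
def Hecke.σ (i : Fin n) : Hecke C z n :=
  RingQuot.mkAlgHom C (HeckeRel C z n) (FreeAlgebra.ι C i)

lemma Hecke.σ_comm (i j : Fin n) (h : (i : ℕ) + 2 ≤ (j : ℕ)) :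
    Hecke.σ (z := z) i * Hecke.σ j = Hecke.σ j * Hecke.σ i := by
  have := RingQuot.mkAlgHom_rel C (HeckeRel.comm (C := C) (z := z) i j h)
  simpa only [map_mul, Hecke.σ] using this

lemma Hecke.σ_braid (i j : Fin n) (h : (j : ℕ) = (i : ℕ) + 1) :
    Hecke.σ (z := z) i * Hecke.σ j * Hecke.σ i = Hecke.σ j * Hecke.σ i * Hecke.σ j := by
  have := RingQuot.mkAlgHom_rel C (HeckeRel.braid (C := C) (z := z) i j h)
  simpa only [map_mul, Hecke.σ] using this

lemma Hecke.σ_quad (i : Fin n) :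
    Hecke.σ (z := z) i * Hecke.σ i = 1 + z • Hecke.σ i := by
  have := RingQuot.mkAlgHom_rel C (HeckeRel.quad (C := C) (z := z) i)
  simpa only [map_mul, map_add, map_one, map_smul, Hecke.σ] using this

lemma Hecke.σ_mul_inv (i : Fin n) :
    Hecke.σ (z := z) i * (Hecke.σ i - z • 1) = 1 := by
  rw [mul_sub, Hecke.σ_quad, mul_smul_comm, mul_one]; abel

lemma Hecke.inv_mul_σ (i : Fin n) :
    (Hecke.σ (z := z) i - z • 1) * Hecke.σ i = 1 := by
  rw [sub_mul, Hecke.σ_quad, smul_mul_assoc, one_mul]; abel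

/-- The generator `σ_{i+1}` as a unit. -/
def Hecke.σU (i : Fin n) : (Hecke C z n)ˣ :=
  ⟨Hecke.σ i, Hecke.σ i - z • 1, Hecke.σ_mul_inv i, Hecke.inv_mul_σ i⟩

/-- The natural embedding `H_{m+1} → H_{n+1}` (`ι` iterated). -/
def Hecke.ιle {m n : ℕ} (h : m ≤ n) : Hecke C z m →ₐ[C] Hecke C z n :=
  RingQuot.liftAlgHom C ⟨FreeAlgebra.lift C (fun i => Hecke.σ (Fin.castLE h i)), by
    rintro x y hxy
    induction hxy with
    | comm i j hij =>
        simp only [map_mul, FreeAlgebra.lift_ι_apply]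
        exact Hecke.σ_comm _ _ (by simpa using hij)
    | braid i j hij =>
        simp only [map_mul, FreeAlgebra.lift_ι_apply]
        exact Hecke.σ_braid _ _ (by simpa using hij)
    | quad i =>
        simp only [map_mul, map_add, map_one, map_smul, FreeAlgebra.lift_ι_apply]
        exact Hecke.σ_quad _⟩

/-- The shift morphism `sh^m : H_{l+1} → H_{l+m+1}`, sending `σ_i` to `σ_{i+m}`. -/
def Hecke.shift (m : ℕ) {l : ℕ} : Hecke C z l →ₐ[C] Hecke C z (m + l) :=
  RingQuot.liftAlgHom C ⟨FreeAlgebra.lift C (fun i => Hecke.σ (Fin.natAdd m i)), by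
    rintro x y hxy
    induction hxy with
    | comm i j hij =>
        simp only [map_mul, FreeAlgebra.lift_ι_apply]
        exact Hecke.σ_comm _ _ (by simp [Fin.natAdd]; omega)
    | braid i j hij =>
        simp only [map_mul, FreeAlgebra.lift_ι_apply]
        exact Hecke.σ_braid _ _ (by simp [Fin.natAdd]; omega)
    | quad i =>
        simp only [map_mul, map_add, map_one, map_smul, FreeAlgebra.lift_ι_apply]
        exact Hecke.σ_quad _⟩


/-- A transverse Markov trace on the tower of Hecke algebras: a family of `R`-linear maps
with the trace property and only the positive stabilization property. -/
def IsHeckeTransverseTrace {C : Type} [CommRing C] (a : Cˣ) (z : C)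
    (t : ∀ m : ℕ, Hecke C z m →ₗ[C] C) : Prop :=
  (∀ (m : ℕ) (u v : Hecke C z m), t m (u * v) = t m (v * u)) ∧
  (∀ (m : ℕ) (u v : Hecke C z m),
    t (m + 1) (Hecke.ιle (Nat.le_succ m) u * Hecke.σ (Fin.last m) *
        Hecke.ιle (Nat.le_succ m) v) = (a : C) * t m (u * v))

/-!
Every element of `Hecke (m + 1)` is a combination of elements `u` and `u σ_m v` with
`u, v ∈ Hecke m`. On the latter, stabilization reduces a transverse trace to level `m`; on the
former one uses that the restricted tower `m ↦ t (m + 1) ∘ ι` is again a transverse trace.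
Hence a transverse trace is determined by `a` and its values at `1`. If
`t m 1 = (t 0 1) ^ (m + 1)`, the restricted tower and `t 0 1 • t` agree at `1`, so
`t (m + 1) ∘ ι = t 0 1 • t m`, and multiplicativity follows by induction on the second factor
through the same decomposition. Conversely, multiplicativity at `u₁ = u₂ = 1` gives
`t (m + 1) 1 = t m 1 * t 0 1`.
-/

theorem map_mul_eq_map_mul_conj_of_braid {A M : Type*} [Monoid A] (f : A → M)
    (hf : ∀ x y, f (x * y) = f (y * x)) (s g : Aˣ) (hbraid : (s * g * s : A) = g * s * g)
    {x : A} (hx : Commute x g) : f (s * x) = f (g * ((↑s⁻¹ : A) * x * s)) := by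
  have hconj : (s * g * ↑s⁻¹ : A) = ↑g⁻¹ * s * g := by
    calc (s * g * ↑s⁻¹ : A) = ↑g⁻¹ * (g * s * g) * ↑s⁻¹ := by simp [mul_assoc]
      _ = ↑g⁻¹ * (s * g * s) * ↑s⁻¹ := by rw [hbraid]
      _ = ↑g⁻¹ * s * g := by simp [mul_assoc]
  calc f (s * x) = f (g * (↑g⁻¹ * s * x)) := by simp [mul_assoc]
    _ = f (↑g⁻¹ * s * x * g) := by rw [hf, mul_assoc]
    _ = f (↑g⁻¹ * s * g * x) := by rw [mul_assoc _ x, hx.eq, ← mul_assoc]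
    _ = f (s * g * ↑s⁻¹ * x) := by rw [hconj]
    _ = f (g * (↑s⁻¹ * x * s)) := by
      have := hf (g * ↑s⁻¹ * x) s
      simp only [mul_assoc] at this ⊢
      exact this.symm

namespace Hecke

variable {m : ℕ}

theorem induction {motive : Hecke C z n → Prop}
    (algebraMap : ∀ c, motive (algebraMap C (Hecke C z n) c))
    (σ : ∀ i, motive (Hecke.σ i))
    (add : ∀ x y, motive x → motive y → motive (x + y))
    (mul : ∀ x y, motive x → motive y → motive (x * y)) (x : Hecke C z n) : motive x := by
  obtain ⟨x, rfl⟩ := RingQuot.mkAlgHom_surjective C (HeckeRel C z n) x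
  induction x using FreeAlgebra.induction with
  | grade0 c => rw [AlgHom.commutes]; exact algebraMap c
  | grade1 i => exact σ i
  | mul x y hx hy => rw [map_mul]; exact mul _ _ hx hy
  | add x y hx hy => rw [map_add]; exact add _ _ hx hy

theorem algHom_ext {A : Type} [Semiring A] [Algebra C A] {f g : Hecke C z n →ₐ[C] A}
    (h : ∀ i, f (σ i) = g (σ i)) : f = g :=
  RingQuot.ringQuot_ext' C f g (FreeAlgebra.hom_ext (funext h))

theorem algebraMap_surjective_zero : Function.Surjective (algebraMap C (Hecke C z 0)) := by
  intro x
  induction x using Hecke.induction with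
  | algebraMap c => exact ⟨c, rfl⟩
  | σ i => exact i.elim0
  | add x y hx hy =>
      obtain ⟨c, rfl⟩ := hx; obtain ⟨d, rfl⟩ := hy; exact ⟨c + d, map_add _ _ _⟩
  | mul x y hx hy =>
      obtain ⟨c, rfl⟩ := hx; obtain ⟨d, rfl⟩ := hy; exact ⟨c * d, map_mul _ _ _⟩

theorem linearMap_ext_zero {M : Type} [AddCommMonoid M] [Module C M]
    {f g : Hecke C z 0 →ₗ[C] M} (h : f 1 = g 1) : f = g := by
  ext x
  obtain ⟨c, rfl⟩ := algebraMap_surjective_zero x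
  rw [Algebra.algebraMap_eq_smul_one, map_smul, map_smul, h]

@[simp]
theorem ιle_σ (h : m ≤ n) (i : Fin m) :
    ιle (C := C) (z := z) h (σ i) = σ (Fin.castLE h i) := by
  rw [ιle, σ, RingQuot.liftAlgHom_mkAlgHom_apply, FreeAlgebra.lift_ι_apply]

@[simp]
theorem shift_σ (m : ℕ) {l : ℕ} (i : Fin l) :
    shift (C := C) (z := z) m (σ i) = σ (Fin.natAdd m i) := by
  rw [shift, σ, RingQuot.liftAlgHom_mkAlgHom_apply, FreeAlgebra.lift_ι_apply]

theorem ιle_ιle {l m : ℕ} (h₁ : l ≤ m) (h₂ : m ≤ n) (u : Hecke C z l) :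
    ιle h₂ (ιle h₁ u) = ιle (h₁.trans h₂) u := by
  rw [← AlgHom.comp_apply]
  congr 1
  refine algHom_ext fun i => ?_
  simp

theorem shift_ιle (m : ℕ) {l l' : ℕ} (h : l ≤ l') (u : Hecke C z l) :
    shift m (ιle h u) = ιle (Nat.add_le_add_left h m) (shift m u) := by
  rw [← AlgHom.comp_apply, ← AlgHom.comp_apply]
  congr 1
  refine algHom_ext fun i => ?_
  simp only [AlgHom.comp_apply, ιle_σ, shift_σ]
  congr 1

theorem commute_ιle_σ (h : m ≤ n) (x : Hecke C z m) (i : Fin n)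
    (hi : m + 1 ≤ (i : ℕ)) : Commute (ιle h x) (σ i) := by
  induction x using Hecke.induction with
  | algebraMap c => rw [AlgHom.commutes]; exact Algebra.commute_algebraMap_left c _
  | σ j => rw [ιle_σ]; exact σ_comm _ _ (by simp; omega)
  | add x y hx hy => rw [map_add]; exact hx.add_left hy
  | mul x y hx hy => rw [map_mul]; exact hx.mul_left hy

theorem commute_ιle_ιle_σ_last (x : Hecke C z m) :
    Commute (ιle (Nat.le_succ (m + 1)) (ιle (Nat.le_succ m) x)) (σ (Fin.last (m + 1))) := by
  rw [ιle_ιle]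
  exact commute_ιle_σ _ x _ (by simp)

theorem σ_last_braid :
    σ (z := z) (Fin.last (m + 1)) * ιle (Nat.le_succ (m + 1)) (σ (Fin.last m)) *
        σ (Fin.last (m + 1)) =
      ιle (Nat.le_succ (m + 1)) (σ (Fin.last m)) * σ (Fin.last (m + 1)) *
        ιle (Nat.le_succ (m + 1)) (σ (Fin.last m)) := by
  rw [ιle_σ]
  exact (σ_braid _ _ (by simp)).symm

def sandwichSpan (m : ℕ) : Submodule C (Hecke C z (m + 1)) :=
  Submodule.span C (Set.range (ιle (Nat.le_succ m)) ∪
    {x | ∃ u v, ιle (Nat.le_succ m) u * σ (Fin.last m) * ιle (Nat.le_succ m) v = x})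

theorem ιle_mem_sandwichSpan (u : Hecke C z m) :
    ιle (Nat.le_succ m) u ∈ sandwichSpan (z := z) m :=
  Submodule.subset_span (Or.inl ⟨u, rfl⟩)

theorem sandwich_mem_sandwichSpan (u v : Hecke C z m) :
    ιle (Nat.le_succ m) u * σ (Fin.last m) * ιle (Nat.le_succ m) v ∈ sandwichSpan (z := z) m :=
  Submodule.subset_span (Or.inr ⟨u, v, rfl⟩)

theorem sandwichSpan_le_comap {M : Type} [AddCommMonoid M] [Module C M]
    {f : Hecke C z (m + 1) →ₗ[C] M} {p : Submodule C M}
    (h₁ : ∀ u, f (ιle (Nat.le_succ m) u) ∈ p)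
    (h₂ : ∀ u v, f (ιle (Nat.le_succ m) u * σ (Fin.last m) * ιle (Nat.le_succ m) v) ∈ p) :
    sandwichSpan m ≤ p.comap f :=
  Submodule.span_le.2 <| by rintro _ (⟨u, rfl⟩ | ⟨u, v, rfl⟩); exacts [h₁ u, h₂ u v]

theorem ιle_mul_mem_sandwichSpan (w : Hecke C z m) {s : Hecke C z (m + 1)}
    (hs : s ∈ sandwichSpan m) : ιle (Nat.le_succ m) w * s ∈ sandwichSpan m := by
  refine sandwichSpan_le_comap (f := LinearMap.mulLeft C (ιle (Nat.le_succ m) w))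
    (p := sandwichSpan m) (fun u => ?_) (fun u v => ?_) hs
  · rw [LinearMap.mulLeft_apply, ← map_mul]
    exact ιle_mem_sandwichSpan _
  · rw [LinearMap.mulLeft_apply, ← mul_assoc, ← mul_assoc, ← map_mul]
    exact sandwich_mem_sandwichSpan _ _

theorem mul_ιle_mem_sandwichSpan (w : Hecke C z m) {s : Hecke C z (m + 1)}
    (hs : s ∈ sandwichSpan m) : s * ιle (Nat.le_succ m) w ∈ sandwichSpan m := by
  refine sandwichSpan_le_comap (f := LinearMap.mulRight C (ιle (Nat.le_succ m) w))
    (p := sandwichSpan m) (fun u => ?_) (fun u v => ?_) hs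
  · rw [LinearMap.mulRight_apply, ← map_mul]
    exact ιle_mem_sandwichSpan _
  · rw [LinearMap.mulRight_apply, mul_assoc, ← map_mul]
    exact sandwich_mem_sandwichSpan _ _

-- The span is then a left ideal containing `1`.
theorem sandwichSpan_eq_top_of
    (hkey : ∀ u : Hecke C z m,
      σ (Fin.last m) * ιle (Nat.le_succ m) u * σ (Fin.last m) ∈ sandwichSpan m) :
    sandwichSpan (z := z) m = ⊤ := by
  have hσ (i : Fin (m + 1)) {s : Hecke C z (m + 1)} (hs : s ∈ sandwichSpan m) :
      σ i * s ∈ sandwichSpan m := by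
    induction i using Fin.lastCases with
    | last =>
        refine sandwichSpan_le_comap (f := LinearMap.mulLeft C (σ (Fin.last m)))
          (p := sandwichSpan m) (fun u => ?_) (fun u v => ?_) hs
        · simpa [← mul_assoc] using sandwich_mem_sandwichSpan (z := z) 1 u
        · rw [LinearMap.mulLeft_apply, ← mul_assoc, ← mul_assoc]
          exact mul_ιle_mem_sandwichSpan v (hkey u)
    | cast j =>
        have := ιle_mul_mem_sandwichSpan (σ j) hs
        rwa [ιle_σ] at this
  have hmul (y : Hecke C z (m + 1)) : ∀ s ∈ sandwichSpan (z := z) m, y * s ∈ sandwichSpan m := by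
    induction y using Hecke.induction with
    | algebraMap c => intro s hs; rw [← Algebra.smul_def]; exact Submodule.smul_mem _ _ hs
    | σ i => exact fun s => hσ i
    | add x y hx hy => intro s hs; rw [add_mul]; exact Submodule.add_mem _ (hx s hs) (hy s hs)
    | mul x y hx hy => intro s hs; rw [mul_assoc]; exact hx _ (hy s hs)
  refine eq_top_iff.2 fun x _ => ?_
  simpa using hmul x 1 (by simpa using ιle_mem_sandwichSpan (z := z) (1 : Hecke C z m))

theorem σ_mul_ιle_mul_σ_mem_sandwichSpan (m : ℕ) (u : Hecke C z m) :
    σ (Fin.last m) * ιle (Nat.le_succ m) u * σ (Fin.last m) ∈ sandwichSpan m := by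
  induction m with
  | zero =>
      obtain ⟨c, rfl⟩ := algebraMap_surjective_zero u
      rw [AlgHom.commutes, Algebra.algebraMap_eq_smul_one, mul_smul_comm, mul_one,
        smul_mul_assoc, σ_quad]
      refine Submodule.smul_mem _ _ (Submodule.add_mem _ ?_ (Submodule.smul_mem _ _ ?_))
      · simpa using ιle_mem_sandwichSpan (z := z) (1 : Hecke C z 0)
      · simpa using sandwich_mem_sandwichSpan (z := z) (1 : Hecke C z 0) 1
  | succ m ih =>
      have hu : u ∈ sandwichSpan m := (sandwichSpan_eq_top_of ih).symm ▸ Submodule.mem_top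
      refine sandwichSpan_le_comap (p := sandwichSpan (m + 1))
        (f := LinearMap.mulRight C (σ (Fin.last (m + 1))) ∘ₗ
          LinearMap.mulLeft C (σ (Fin.last (m + 1))) ∘ₗ (ιle (Nat.le_succ (m + 1))).toLinearMap)
        (fun p => ?_) (fun p q => ?_) hu
      all_goals simp only [LinearMap.comp_apply, AlgHom.toLinearMap_apply,
        LinearMap.mulLeft_apply, LinearMap.mulRight_apply]
      · -- `σ_{m+1}` commutes past `Hecke m` and the quadratic relation applies
        rw [← (commute_ιle_ιle_σ_last p).eq, mul_assoc, σ_quad, mul_add, mul_one, mul_smul_comm]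
        refine Submodule.add_mem _ (ιle_mem_sandwichSpan _) (Submodule.smul_mem _ _ ?_)
        simpa using sandwich_mem_sandwichSpan (z := z) (ιle (Nat.le_succ m) p) 1
      · -- `σ_{m+1}` commutes past `Hecke m` and the braid relation applies
        have hp := commute_ιle_ιle_σ_last (z := z) p
        have hq := commute_ιle_ιle_σ_last (z := z) q
        have hbraid := σ_last_braid (z := z) (m := m)
        have := sandwich_mem_sandwichSpan (z := z) (ιle (Nat.le_succ m) p * σ (Fin.last m))
          (σ (Fin.last m) * ιle (Nat.le_succ m) q)
        simp only [map_mul] at this ⊢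
        convert this using 1
        calc _ = ιle (Nat.le_succ (m + 1)) (ιle (Nat.le_succ m) p) *
              (σ (Fin.last (m + 1)) * ιle (Nat.le_succ (m + 1)) (σ (Fin.last m)) *
                σ (Fin.last (m + 1))) * ιle (Nat.le_succ (m + 1)) (ιle (Nat.le_succ m) q) := by
              simp only [mul_assoc]; rw [hq.eq, ← hp.left_comm]
          _ = _ := by rw [hbraid]; simp only [mul_assoc]

theorem sandwichSpan_eq_top (m : ℕ) : sandwichSpan (C := C) (z := z) m = ⊤ :=
  sandwichSpan_eq_top_of (σ_mul_ιle_mul_σ_mem_sandwichSpan m)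

theorem linearMap_ext_succ {M : Type} [AddCommMonoid M] [Module C M]
    {f g : Hecke C z (m + 1) →ₗ[C] M}
    (h₁ : ∀ u, f (ιle (Nat.le_succ m) u) = g (ιle (Nat.le_succ m) u))
    (h₂ : ∀ u v, f (ιle (Nat.le_succ m) u * σ (Fin.last m) * ιle (Nat.le_succ m) v) =
      g (ιle (Nat.le_succ m) u * σ (Fin.last m) * ιle (Nat.le_succ m) v)) : f = g :=
  LinearMap.ext_on (sandwichSpan_eq_top m) <| by
    rintro _ (⟨u, rfl⟩ | ⟨u, v, rfl⟩); exacts [h₁ u, h₂ u v]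

theorem ιle_σU_inv (h : m ≤ n) (i : Fin m) :
    ιle (C := C) (z := z) h (((σU i)⁻¹ : (Hecke C z m)ˣ) : Hecke C z m) =
      (((σU (Fin.castLE h i))⁻¹ : (Hecke C z n)ˣ) : Hecke C z n) := by
  change ιle h (σ i - z • 1) = σ _ - z • 1
  simp

end Hecke

def restrictSucc (t : ∀ m : ℕ, Hecke C z m →ₗ[C] C) (m : ℕ) : Hecke C z m →ₗ[C] C :=
  t (m + 1) ∘ₗ (Hecke.ιle (Nat.le_succ m)).toLinearMap

namespace IsHeckeTransverseTrace

variable {a : Cˣ} {t t' : ∀ m : ℕ, Hecke C z m →ₗ[C] C}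

theorem smul (ht : IsHeckeTransverseTrace a z t) (c : C) :
    IsHeckeTransverseTrace a z (c • t) :=
  ⟨fun m u v => by simp only [Pi.smul_apply, LinearMap.smul_apply, ht.1 m u v],
   fun m u v => by
    simp only [Pi.smul_apply, LinearMap.smul_apply, ht.2 m u v, smul_eq_mul]; ring⟩

/-- Stabilization one level down: conjugating by `σ_m` moves `σ_m` to the top generator
`σ_{m+1}`, where stabilization applies. -/
theorem restrictSucc (ht : IsHeckeTransverseTrace a z t) :
    IsHeckeTransverseTrace a z (restrictSucc t) := by
  refine ⟨fun m u v => by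
    simp only [_root_.restrictSucc, LinearMap.comp_apply, AlgHom.toLinearMap_apply, map_mul]
    exact ht.1 _ _ _, fun m u v => ?_⟩
  simp only [_root_.restrictSucc, LinearMap.comp_apply, AlgHom.toLinearMap_apply]
  set ι₁ := Hecke.ιle (C := C) (z := z) (Nat.le_succ m)
  set ι₂ := Hecke.ιle (C := C) (z := z) (Nat.le_succ (m + 1))
  set s' := Hecke.σU (C := C) (z := z) (Fin.last m)
  have hbraid := Hecke.σ_last_braid (C := C) (z := z) (m := m)
  rw [Hecke.ιle_σ] at hbraid
  have hconj := map_mul_eq_map_mul_conj_of_braid (t (m + 2)) (ht.1 _)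
    (Hecke.σU (Fin.castLE (Nat.le_succ (m + 1)) (Fin.last m))) (Hecke.σU (Fin.last (m + 1)))
    hbraid.symm (Hecke.commute_ιle_ιle_σ_last (v * u))
  calc t (m + 2) (ι₂ (ι₁ u * Hecke.σ (Fin.last m) * ι₁ v))
      = t (m + 2) (ι₂ s' * ι₂ (ι₁ (v * u))) := by
        rw [mul_assoc, map_mul ι₂, ht.1, ← map_mul ι₂, mul_assoc, ← map_mul ι₁, map_mul ι₂]
        rfl
    _ = t (m + 2) (Hecke.σ (Fin.last (m + 1)) * ι₂ (↑s'⁻¹ * ι₁ (v * u) * s')) := by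
        rw [map_mul ι₂, map_mul ι₂, Hecke.ιle_σU_inv, show ι₂ s' = _ from Hecke.ιle_σ _ _]
        exact hconj
    _ = (a : C) * t (m + 1) (↑s'⁻¹ * ι₁ (v * u) * s') := by
        simpa using ht.2 (m + 1) 1 (↑s'⁻¹ * ι₁ (v * u) * s')
    _ = (a : C) * t (m + 1) (ι₁ (u * v)) := by
        rw [ht.1, ← mul_assoc, Units.mul_inv, one_mul, map_mul ι₁, map_mul ι₁, ht.1]

theorem eq_of_map_one (ht : IsHeckeTransverseTrace a z t) (ht' : IsHeckeTransverseTrace a z t')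
    (h : ∀ m, t m 1 = t' m 1) : t = t' := by
  funext n
  induction n generalizing t t' with
  | zero => exact Hecke.linearMap_ext_zero (h 0)
  | succ n ih =>
      refine Hecke.linearMap_ext_succ (fun u => ?_) (fun u v => ?_)
      · have hr := ih ht.restrictSucc ht'.restrictSucc fun m => by
          simpa [_root_.restrictSucc] using h (m + 1)
        exact LinearMap.congr_fun hr u
      · rw [ht.2, ht'.2, ih ht ht' h]

theorem map_ιle (ht : IsHeckeTransverseTrace a z t) (hα : ∀ m, t m 1 = t 0 1 ^ (m + 1))
    {m : ℕ} (u : Hecke C z m) :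
    t (m + 1) (Hecke.ιle (Nat.le_succ m) u) = t 0 1 * t m u := by
  have h := ht.restrictSucc.eq_of_map_one (ht.smul (t 0 1)) fun m => by
    simp only [_root_.restrictSucc, LinearMap.comp_apply, AlgHom.toLinearMap_apply, map_one,
      Pi.smul_apply, LinearMap.smul_apply, smul_eq_mul]
    rw [hα (m + 1), hα m, pow_succ' _ (m + 1)]
  exact LinearMap.congr_fun (congrFun h m) u

theorem map_ιle_mul_shift (ht : IsHeckeTransverseTrace a z t)
    (hα : ∀ m, t m 1 = t 0 1 ^ (m + 1)) {l₁ : ℕ} (u₁ : Hecke C z l₁) (l₂ : ℕ)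
    (u₂ : Hecke C z l₂) :
    t (l₁ + 1 + l₂) (Hecke.ιle (Nat.le_add_right_of_le l₁.le_succ) u₁ * Hecke.shift (l₁ + 1) u₂) =
      t l₁ u₁ * t l₂ u₂ := by
  suffices t (l₁ + 1 + l₂) ∘ₗ
      LinearMap.mulLeft C (Hecke.ιle (Nat.le_add_right_of_le l₁.le_succ) u₁) ∘ₗ
      (Hecke.shift (l₁ + 1)).toLinearMap = t l₁ u₁ • t l₂ from LinearMap.congr_fun this u₂
  clear u₂
  induction l₂ with
  | zero =>
      refine Hecke.linearMap_ext_zero ?_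
      simpa [mul_comm] using ht.map_ιle hα u₁
  | succ l ih =>
      have ih' (y : Hecke C z l) :
          t (l₁ + 1 + l) (Hecke.ιle (Nat.le_add_right_of_le l₁.le_succ) u₁ *
            Hecke.shift (l₁ + 1) y) = t l₁ u₁ * t l y :=
        LinearMap.congr_fun ih y
      have hι : Hecke.ιle (Nat.le_add_right_of_le l₁.le_succ : l₁ ≤ l₁ + 1 + (l + 1)) u₁ =
          Hecke.ιle (Nat.le_succ _)
            (Hecke.ιle (Nat.le_add_right_of_le l₁.le_succ : l₁ ≤ l₁ + 1 + l) u₁) :=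
        (Hecke.ιle_ιle _ _ _).symm
      refine Hecke.linearMap_ext_succ (fun y => ?_) (fun p q => ?_) <;>
        simp only [LinearMap.comp_apply, LinearMap.mulLeft_apply, AlgHom.toLinearMap_apply,
          LinearMap.smul_apply, smul_eq_mul, hι]
      · rw [Hecke.shift_ιle, ← map_mul]
        refine (ht.map_ιle hα (m := l₁ + 1 + l) _).trans ?_
        rw [ih', ht.map_ιle hα]
        ring
      · rw [map_mul (Hecke.shift _), map_mul (Hecke.shift _), Hecke.shift_σ, Fin.natAdd_last,
          Hecke.shift_ιle, Hecke.shift_ιle, ← mul_assoc, ← mul_assoc, ← map_mul]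
        refine (ht.2 (l₁ + 1 + l) _ _).trans ?_
        rw [mul_assoc, ← map_mul, ih', ht.2]
        ring

end IsHeckeTransverseTrace

/-- A transverse Markov trace on the tower of Hecke algebras with
parameters `α_n = τ_n(1)` is multiplicative, i.e.
`τ_{n₁+n₂}(u₁ ⊗ u₂) = τ_{n₁}(u₁) τ_{n₂}(u₂)` where `u₂` is placed on the strands
`n₁+1, …, n₁+n₂` via the shift, if and only if `α_n = α_1ⁿ` for all `n ≥ 2`. -/
theorem hecke_transverse_trace_multiplicative_iff (C : Type) [CommRing C]
    (a : Cˣ) (z : C)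
    (t : ∀ m : ℕ, Hecke C z m →ₗ[C] C) (ht : IsHeckeTransverseTrace a z t) :
    (∀ (l₁ l₂ : ℕ) (u₁ : Hecke C z l₁) (u₂ : Hecke C z l₂),
        t (l₁ + 1 + l₂) (Hecke.ιle (by omega) u₁ * Hecke.shift (l₁ + 1) u₂)
          = t l₁ u₁ * t l₂ u₂)
      ↔ (∀ m : ℕ, t m 1 = (t 0 1) ^ (m + 1)) := by
  refine ⟨fun hmul m => ?_, fun hα l₁ l₂ u₁ u₂ => ht.map_ιle_mul_shift hα u₁ l₂ u₂⟩
  induction m with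
  | zero => exact (pow_one _).symm
  | succ m ih =>
      have h := hmul m 0 1 1
      rw [map_one, map_one, one_mul, ih] at h
      rw [pow_succ]
      exact h
end
end

section
/- Let (τ_n) be a transverse Markov trace on the tower of BMW algebras. Then for all n ≥ 1 and v ∈ BMW_n: τ_{n+2}(v e_{n+1}) = δ τ_{n+1}(v e_n), where δ = (a−a^{−1})/(q−q^{−1}) + 1. -/
noncomputable section

open FreeAlgebra

/-- In the free algebra on generators `inl i ↦ s_i`, `inr i ↦ s_i⁻¹`, the element
`z·e_i = s_i⁻¹ - s_i + z·1`. -/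
def BMWe (C : Type) [CommRing C] (z : Cˣ) {n : ℕ} (i : Fin n) :
    FreeAlgebra C (Fin n ⊕ Fin n) :=
  ι C (Sum.inr i) - ι C (Sum.inl i) + (z : C) • 1

/-- Defining relations of the Birman–Murakami–Wenzl algebra with `n` generators
`s_1, …, s_n` (the paper's `BMW_{n+1}`), over a commutative ring `C` with invertible
parameters `a` and `z` (in the paper `z = q - q⁻¹`).  The relations involving
`e_i = (s_i⁻¹ - s_i)/z + 1` are written multiplied through by the unit `z`,
using `z·e_i = s_i⁻¹ - s_i + z·1`, which is equivalent since `z` is invertible. -/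
inductive BMWRel (C : Type) [CommRing C] (a z : Cˣ) (n : ℕ) :
    FreeAlgebra C (Fin n ⊕ Fin n) → FreeAlgebra C (Fin n ⊕ Fin n) → Prop
  | mul_inv (i : Fin n) :
      BMWRel C a z n (ι C (Sum.inl i) * ι C (Sum.inr i)) 1
  | inv_mul (i : Fin n) :
      BMWRel C a z n (ι C (Sum.inr i) * ι C (Sum.inl i)) 1
  | comm (i j : Fin n) (h : (i : ℕ) + 2 ≤ (j : ℕ)) :
      BMWRel C a z n (ι C (Sum.inl i) * ι C (Sum.inl j))
        (ι C (Sum.inl j) * ι C (Sum.inl i))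
  | braid (i j : Fin n) (h : (j : ℕ) = (i : ℕ) + 1) :
      BMWRel C a z n (ι C (Sum.inl i) * ι C (Sum.inl j) * ι C (Sum.inl i))
        (ι C (Sum.inl j) * ι C (Sum.inl i) * ι C (Sum.inl j))
  | es (i : Fin n) :
      BMWRel C a z n (BMWe C z i * ι C (Sum.inl i)) (((a⁻¹ : Cˣ) : C) • BMWe C z i)
  | ese (i j : Fin n) (h : (j : ℕ) = (i : ℕ) + 1) :
      BMWRel C a z n (BMWe C z i * ι C (Sum.inl j) * BMWe C z i)
        (((z : C) * (a : C)) • BMWe C z i)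
  | esinve (i j : Fin n) (h : (j : ℕ) = (i : ℕ) + 1) :
      BMWRel C a z n (BMWe C z i * ι C (Sum.inr j) * BMWe C z i)
        (((z : C) * ((a⁻¹ : Cˣ) : C)) • BMWe C z i)

/-- The Birman–Murakami–Wenzl algebra with `n` generators (the paper's `BMW_{n+1}`). -/
abbrev BMW (C : Type) [CommRing C] (a z : Cˣ) (n : ℕ) : Type :=
  RingQuot (BMWRel C a z n)

variable {C : Type} [CommRing C] {a z : Cˣ} {n : ℕ}

/-- The generator `s_{i+1}`. -/
def BMW.S (i : Fin n) : BMW C a z n :=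
  RingQuot.mkAlgHom C (BMWRel C a z n) (ι C (Sum.inl i))

/-- The inverse generator `s_{i+1}⁻¹`. -/
def BMW.Sinv (i : Fin n) : BMW C a z n :=
  RingQuot.mkAlgHom C (BMWRel C a z n) (ι C (Sum.inr i))

/-- The element `e_{i+1} = (s_{i+1}⁻¹ - s_{i+1})/z + 1`. -/
def BMW.e (i : Fin n) : BMW C a z n :=
  ((z⁻¹ : Cˣ) : C) • (BMW.Sinv i - BMW.S i) + 1

lemma BMW.S_mul_Sinv (i : Fin n) : BMW.S (a := a) (z := z) i * BMW.Sinv i = 1 := by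
  have := RingQuot.mkAlgHom_rel C (BMWRel.mul_inv (C := C) (a := a) (z := z) i)
  simpa only [map_mul, map_one, BMW.S, BMW.Sinv] using this

lemma BMW.Sinv_mul_S (i : Fin n) : BMW.Sinv (a := a) (z := z) i * BMW.S i = 1 := by
  have := RingQuot.mkAlgHom_rel C (BMWRel.inv_mul (C := C) (a := a) (z := z) i)
  simpa only [map_mul, map_one, BMW.S, BMW.Sinv] using this

/-- The generator `s_{i+1}` as a unit. -/
def BMW.sU (i : Fin n) : (BMW C a z n)ˣ :=
  ⟨BMW.S i, BMW.Sinv i, BMW.S_mul_Sinv i, BMW.Sinv_mul_S i⟩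

lemma BMW.S_comm (i j : Fin n) (h : (i : ℕ) + 2 ≤ (j : ℕ)) :
    BMW.S (a := a) (z := z) i * BMW.S j = BMW.S j * BMW.S i := by
  have := RingQuot.mkAlgHom_rel C (BMWRel.comm (C := C) (a := a) (z := z) i j h)
  simpa only [map_mul, BMW.S, BMW.Sinv] using this

lemma BMW.S_braid (i j : Fin n) (h : (j : ℕ) = (i : ℕ) + 1) :
    BMW.S (a := a) (z := z) i * BMW.S j * BMW.S i = BMW.S j * BMW.S i * BMW.S j := by
  have := RingQuot.mkAlgHom_rel C (BMWRel.braid (C := C) (a := a) (z := z) i j h)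
  simpa only [map_mul, BMW.S, BMW.Sinv] using this

/-- The image of `z·e_i` in the BMW algebra. -/
lemma BMW.mk_BMWe (i : Fin n) :
    RingQuot.mkAlgHom C (BMWRel C a z n) (BMWe C z i)
      = BMW.Sinv i - BMW.S i + (z : C) • 1 := by
  simp only [BMWe, map_add, map_sub, map_smul, map_one]
  rfl

lemma BMW.Es (i : Fin n) :
    (BMW.Sinv (a := a) (z := z) i - BMW.S i + (z : C) • 1) * BMW.S i
      = ((a⁻¹ : Cˣ) : C) • (BMW.Sinv i - BMW.S i + (z : C) • 1) := by
  have := RingQuot.mkAlgHom_rel C (BMWRel.es (C := C) (a := a) (z := z) i)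
  simpa only [map_mul, map_smul, BMW.mk_BMWe, BMW.S, BMW.Sinv] using this

lemma BMW.EsE (i j : Fin n) (h : (j : ℕ) = (i : ℕ) + 1) :
    (BMW.Sinv (a := a) (z := z) i - BMW.S i + (z : C) • 1) * BMW.S j *
        (BMW.Sinv i - BMW.S i + (z : C) • 1)
      = ((z : C) * (a : C)) • (BMW.Sinv i - BMW.S i + (z : C) • 1) := by
  have := RingQuot.mkAlgHom_rel C (BMWRel.ese (C := C) (a := a) (z := z) i j h)
  simpa only [map_mul, map_smul, BMW.mk_BMWe, BMW.S, BMW.Sinv] using this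

lemma BMW.EsinvE (i j : Fin n) (h : (j : ℕ) = (i : ℕ) + 1) :
    (BMW.Sinv (a := a) (z := z) i - BMW.S i + (z : C) • 1) * BMW.Sinv j *
        (BMW.Sinv i - BMW.S i + (z : C) • 1)
      = ((z : C) * ((a⁻¹ : Cˣ) : C)) • (BMW.Sinv i - BMW.S i + (z : C) • 1) := by
  have := RingQuot.mkAlgHom_rel C (BMWRel.esinve (C := C) (a := a) (z := z) i j h)
  simpa only [map_mul, map_smul, BMW.mk_BMWe, BMW.S, BMW.Sinv] using this

/-- The natural embedding `BMW_{m+1} → BMW_{n+1}` (`ι` iterated). -/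
def BMW.ιle {m n : ℕ} (h : m ≤ n) : BMW C a z m →ₐ[C] BMW C a z n :=
  RingQuot.liftAlgHom C ⟨FreeAlgebra.lift C
      (Sum.elim (fun i => BMW.S (Fin.castLE h i)) (fun i => BMW.Sinv (Fin.castLE h i))), by
    rintro x y hxy
    induction hxy with
    | mul_inv i =>
        simp only [map_mul, map_one, FreeAlgebra.lift_ι_apply, Sum.elim_inl, Sum.elim_inr]
        exact BMW.S_mul_Sinv _
    | inv_mul i =>
        simp only [map_mul, map_one, FreeAlgebra.lift_ι_apply, Sum.elim_inl, Sum.elim_inr]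
        exact BMW.Sinv_mul_S _
    | comm i j hij =>
        simp only [map_mul, FreeAlgebra.lift_ι_apply, Sum.elim_inl]
        exact BMW.S_comm _ _ (by simpa using hij)
    | braid i j hij =>
        simp only [map_mul, FreeAlgebra.lift_ι_apply, Sum.elim_inl]
        exact BMW.S_braid _ _ (by simpa using hij)
    | es i =>
        simp only [BMWe, map_mul, map_add, map_sub, map_one, map_smul,
          FreeAlgebra.lift_ι_apply, Sum.elim_inl, Sum.elim_inr]
        exact BMW.Es _
    | ese i j hij =>
        simp only [BMWe, map_mul, map_add, map_sub, map_one, map_smul,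
          FreeAlgebra.lift_ι_apply, Sum.elim_inl, Sum.elim_inr]
        exact BMW.EsE _ _ (by simpa using hij)
    | esinve i j hij =>
        simp only [BMWe, map_mul, map_add, map_sub, map_one, map_smul,
          FreeAlgebra.lift_ι_apply, Sum.elim_inl, Sum.elim_inr]
        exact BMW.EsinvE _ _ (by simpa using hij)⟩


/-- A transverse Markov trace on the tower of BMW algebras: a family of `R`-linear maps
with the trace property and only the positive stabilization property. -/
def IsBMWTransverseTrace {C : Type} [CommRing C] (a z : Cˣ)
    (t : ∀ m : ℕ, BMW C a z m →ₗ[C] C) : Prop :=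
  (∀ (m : ℕ) (u v : BMW C a z m), t m (u * v) = t m (v * u)) ∧
  (∀ (m : ℕ) (u v : BMW C a z m),
    t (m + 1) (BMW.ιle (Nat.le_succ m) u * BMW.S (Fin.last m) *
        BMW.ιle (Nat.le_succ m) v) = (a : C) * t m (u * v))

/-! Put `i = n`, `j = n + 1`. Conjugation by `s_i s_j` carries `e_i` to `e_j`, so the relation
`e_i s_j e_i = a e_i` becomes `e_j s_i e_j = a e_j`. As `v` commutes with `e_j`, the trace property
gives `a τ(v e_j) = τ(v e_j s_i e_j) = τ(v e_j² s_i) = δ τ(v e_j s_i)`. Writing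
`e_j s_i = s_i s_j e_i s_j⁻¹` and cycling `s_j⁻¹` around the trace, the braid relation turns
`τ(v e_j s_i)` into `τ(v s_i · s_j · s_i⁻¹ e_i)`, which positive stabilization evaluates to
`a τ(v e_i)`. Cancelling the unit `a` gives the claim. -/

namespace BMW

variable {C : Type} [CommRing C] {a z : Cˣ} {n : ℕ}

lemma commute_Sinv_of_commute_S {x : BMW C a z n} {i : Fin n} (hx : Commute x (S i)) :
    Commute x (Sinv i) :=
  Commute.units_inv_right (u := sU i) hx

lemma commute_e_of_commute_S {x : BMW C a z n} {i : Fin n} (hx : Commute x (S i)) :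
    Commute x (e i) :=
  (((commute_Sinv_of_commute_S hx).sub_right hx).smul_right _).add_right (Commute.one_right x)

lemma commute_Sinv_e (i : Fin n) : Commute (Sinv (a := a) (z := z) i) (e i) :=
  commute_e_of_commute_S (commute_Sinv_of_commute_S (Commute.refl _)).symm

lemma e_eq_smul (i : Fin n) :
    e (a := a) (z := z) i = ((z⁻¹ : Cˣ) : C) • (Sinv i - S i + (z : C) • 1) := by
  rw [e, smul_add, smul_smul, Units.inv_mul, one_smul]

lemma e_mul_S (i : Fin n) : e (a := a) (z := z) i * S i = ((a⁻¹ : Cˣ) : C) • e i := by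
  rw [e_eq_smul, smul_mul_assoc, Es, smul_comm]

lemma e_mul_Sinv (i : Fin n) : e (a := a) (z := z) i * Sinv i = (a : C) • e i := by
  calc e i * Sinv i = (a : C) • ((e i * S i) * Sinv i) := by
        rw [e_mul_S, smul_mul_assoc, smul_smul, Units.mul_inv, one_smul]
    _ = (a : C) • e i := by rw [mul_assoc, S_mul_Sinv, mul_one]

lemma Sinv_mul_e (i : Fin n) : Sinv (a := a) (z := z) i * e i = (a : C) • e i := by
  rw [(commute_Sinv_e i).eq, e_mul_Sinv]

lemma e_mul_self (i : Fin n) :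
    e (a := a) (z := z) i * e i
      = (((a : C) - ((a⁻¹ : Cˣ) : C)) * ((z⁻¹ : Cˣ) : C) + 1) • e i := by
  nth_rw 2 [e]
  rw [mul_add, mul_smul_comm, mul_sub, e_mul_Sinv, e_mul_S, mul_one]
  module

lemma e_mul_S_mul_e {i j : Fin n} (h : (j : ℕ) = i + 1) :
    e (a := a) (z := z) i * S j * e i = (a : C) • e i := by
  simp only [e_eq_smul, smul_mul_assoc, mul_smul_comm, EsE i j h, smul_smul]
  rw [Units.inv_mul_cancel_left, mul_comm]

lemma S_mul_S_mul_Sinv {i j : Fin n} (h : (j : ℕ) = i + 1) :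
    S (a := a) (z := z) i * S j * Sinv i = Sinv j * (S i * S j) := by
  calc S i * S j * Sinv i = Sinv j * S j * (S i * S j * Sinv i) := by rw [Sinv_mul_S, one_mul]
    _ = Sinv j * (S j * S i * S j) * Sinv i := by noncomm_ring
    _ = Sinv j * (S i * S j) * (S i * Sinv i) := by rw [← S_braid i j h]; noncomm_ring
    _ = Sinv j * (S i * S j) := by rw [S_mul_Sinv, mul_one]

lemma S_mul_S_mul_e {i j : Fin n} (h : (j : ℕ) = i + 1) :
    S (a := a) (z := z) i * S j * e i = e j * (S i * S j) := by
  simp only [e, mul_add, add_mul, mul_smul_comm, smul_mul_assoc, mul_sub, sub_mul, mul_one,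
    one_mul, S_mul_S_mul_Sinv h, S_braid i j h]
  noncomm_ring

lemma e_succ_eq {i j : Fin n} (h : (j : ℕ) = i + 1) :
    e (a := a) (z := z) j = S i * S j * e i * (Sinv j * Sinv i) := by
  rw [S_mul_S_mul_e h, mul_assoc, mul_assoc (S i), ← mul_assoc (S j), S_mul_Sinv, one_mul,
    S_mul_Sinv, mul_one]

lemma e_succ_mul_S_mul_e_succ {i j : Fin n} (h : (j : ℕ) = i + 1) :
    e (a := a) (z := z) j * S i * e j = (a : C) • e j := by
  have hmid : Sinv j * Sinv i * S i * (S i * S j) = S (a := a) (z := z) i * S j * Sinv i := by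
    rw [mul_assoc (Sinv j), Sinv_mul_S, mul_one, S_mul_S_mul_Sinv h]
  calc e j * S i * e j
      = S i * S j * (e i * (Sinv j * Sinv i * S i * (S i * S j)) * e i) * (Sinv j * Sinv i) := by
        rw [e_succ_eq h]; noncomm_ring
    _ = S i * S j * ((e i * S i) * S j * (Sinv i * e i)) * (Sinv j * Sinv i) := by
        rw [hmid]; noncomm_ring
    _ = S i * S j * (e i * S j * e i) * (Sinv j * Sinv i) := by
        simp only [e_mul_S, Sinv_mul_e, smul_mul_assoc, mul_smul_comm, smul_smul,
          Units.mul_inv, one_smul]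
    _ = (a : C) • e j := by
        rw [e_mul_S_mul_e h, e_succ_eq h]
        simp only [smul_mul_assoc, mul_smul_comm]

lemma ιle_S {m : ℕ} (h : m ≤ n) (i : Fin m) :
    ιle (C := C) (a := a) (z := z) h (S i) = S (Fin.castLE h i) := by
  simp only [ιle, S, RingQuot.liftAlgHom_mkAlgHom_apply, FreeAlgebra.lift_ι_apply, Sum.elim_inl]

lemma ιle_Sinv {m : ℕ} (h : m ≤ n) (i : Fin m) :
    ιle (C := C) (a := a) (z := z) h (Sinv i) = Sinv (Fin.castLE h i) := by
  simp only [ιle, Sinv, RingQuot.liftAlgHom_mkAlgHom_apply, FreeAlgebra.lift_ι_apply,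
    Sum.elim_inr]

lemma ιle_e {m : ℕ} (h : m ≤ n) (i : Fin m) :
    ιle (C := C) (a := a) (z := z) h (e i) = e (Fin.castLE h i) := by
  simp only [e, map_add, map_smul, map_sub, map_one, ιle_S, ιle_Sinv]

lemma ιle_ιle {m k : ℕ} (h₁ : m ≤ k) (h₂ : k ≤ n) (x : BMW C a z m) :
    ιle h₂ (ιle h₁ x) = ιle (h₁.trans h₂) x := by
  change (ιle h₂).comp (ιle h₁) x = _
  congr 1
  ext (i | i)
  · change ιle h₂ (ιle h₁ (S i)) = ιle _ (S i)
    simp only [ιle_S, Fin.castLE_castLE]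
  · change ιle h₂ (ιle h₁ (Sinv i)) = ιle _ (Sinv i)
    simp only [ιle_Sinv, Fin.castLE_castLE]

lemma commute_ιle_S {m : ℕ} (h : m ≤ n) (x : BMW C a z m) {j : Fin n} (hj : m + 1 ≤ j) :
    Commute (ιle h x) (S j) := by
  set gens : Fin m ⊕ Fin m → BMW C a z n :=
    Sum.elim (fun i => S (Fin.castLE h i)) (fun i => Sinv (Fin.castLE h i))
  have mem : ∀ y, Commute y (S j) → y ∈ Subalgebra.centralizer C {S (a := a) (z := z) j} :=
    fun y hy => (Subalgebra.mem_centralizer_iff C).2 fun _ hg => hg ▸ hy.symm.eq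
  have far (i : Fin m) : Commute (S (a := a) (z := z) (Fin.castLE h i)) (S j) :=
    S_comm _ _ (by simp only [Fin.val_castLE]; omega)
  have hgens : Set.range gens ⊆ Subalgebra.centralizer C {S (a := a) (z := z) j} := by
    rintro _ ⟨i | i, rfl⟩
    · exact mem _ (far i)
    · exact mem _ (commute_Sinv_of_commute_S (far i).symm).symm
  obtain ⟨y, rfl⟩ := RingQuot.mkAlgHom_surjective C _ x
  have hy : FreeAlgebra.lift C gens y ∈ Algebra.adjoin C (Set.range gens) := by
    rw [Algebra.adjoin_range_eq_range_freeAlgebra_lift]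
    exact ⟨y, rfl⟩
  simp only [ιle, RingQuot.liftAlgHom_mkAlgHom_apply]
  exact ((Subalgebra.mem_centralizer_iff C).1 (Algebra.adjoin_le hgens hy) _ rfl).symm

end BMW

namespace IsBMWTransverseTrace

variable {C : Type} [CommRing C] {a z : Cˣ} {t : ∀ m : ℕ, BMW C a z m →ₗ[C] C}

lemma trace_e_succ_mul_S (ht : IsBMWTransverseTrace a z t) {m : ℕ} (v : BMW C a z m) :
    t (m + 2) (BMW.ιle (Nat.le_add_right m 2) v * BMW.e (Fin.last (m + 1)) *
        BMW.S (Fin.castLE (Nat.le_succ _) (Fin.last m)))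
      = (a : C) * t (m + 1) (BMW.ιle (Nat.le_succ m) v * BMW.e (Fin.last m)) := by
  set i : Fin (m + 2) := Fin.castLE (Nat.le_succ _) (Fin.last m)
  set j : Fin (m + 2) := Fin.last (m + 1)
  have hij : (j : ℕ) = i + 1 := rfl
  set V : BMW C a z (m + 2) := BMW.ιle (Nat.le_add_right m 2) v
  have hV : Commute V (BMW.Sinv j) :=
    BMW.commute_Sinv_of_commute_S (BMW.commute_ιle_S _ v le_rfl)
  have markov := ht.2 (m + 1) (BMW.ιle (Nat.le_succ m) v * BMW.S (Fin.last m))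
    (BMW.Sinv (Fin.last m) * BMW.e (Fin.last m))
  simp only [map_mul, BMW.ιle_ιle, BMW.ιle_S, BMW.ιle_Sinv, BMW.ιle_e] at markov
  calc t (m + 2) (V * BMW.e j * BMW.S i)
      = t (m + 2) (V * (BMW.S i * BMW.S j * BMW.e i) * BMW.Sinv j * (BMW.Sinv i * BMW.S i)) := by
        rw [BMW.e_succ_eq hij]; noncomm_ring
    _ = t (m + 2) (BMW.Sinv j * (V * (BMW.S i * BMW.S j * BMW.e i))) := by
        rw [BMW.Sinv_mul_S, mul_one, ht.1]
    _ = t (m + 2) (V * BMW.S i * BMW.S j * (BMW.Sinv i * BMW.e i)) := by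
        rw [← mul_assoc, ← hV.eq, mul_assoc V, ← mul_assoc (BMW.Sinv j),
          ← BMW.S_mul_S_mul_Sinv hij]
        noncomm_ring
    _ = (a : C) * t (m + 1) (BMW.ιle (Nat.le_succ m) v * BMW.e (Fin.last m)) := by
        rw [markov, ← mul_assoc, mul_assoc _ (BMW.S _), BMW.S_mul_Sinv, mul_one]

end IsBMWTransverseTrace

theorem bmw_transverse_trace_e_reduction (C : Type) [CommRing C] (a z : Cˣ)
    (t : ∀ m : ℕ, BMW C a z m →ₗ[C] C) (ht : IsBMWTransverseTrace a z t) :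
    ∀ (m : ℕ) (v : BMW C a z m),
      t (m + 2) (BMW.ιle (by omega) v * BMW.e (Fin.last (m + 1)))
        = (((a : C) - ((a⁻¹ : Cˣ) : C)) * ((z⁻¹ : Cˣ) : C) + 1) *
            t (m + 1) (BMW.ιle (Nat.le_succ m) v * BMW.e (Fin.last m)) := by
  intro m v
  set δ : C := ((a : C) - ((a⁻¹ : Cˣ) : C)) * ((z⁻¹ : Cˣ) : C) + 1
  set i : Fin (m + 2) := Fin.castLE (Nat.le_succ _) (Fin.last m)
  set j : Fin (m + 2) := Fin.last (m + 1)
  have hij : (j : ℕ) = i + 1 := rfl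
  set V : BMW C a z (m + 2) := BMW.ιle (Nat.le_add_right m 2) v
  have hV : Commute V (BMW.e j) := BMW.commute_e_of_commute_S (BMW.commute_ιle_S _ v le_rfl)
  refine a.isUnit.mul_left_cancel ?_
  calc (a : C) * t (m + 2) (V * BMW.e j)
      = t (m + 2) (V * (BMW.e j * BMW.S i * BMW.e j)) := by
        rw [BMW.e_succ_mul_S_mul_e_succ hij, mul_smul_comm, map_smul, smul_eq_mul]
    _ = t (m + 2) (BMW.e j * (V * BMW.e j * BMW.S i)) := by
        rw [ht.1 _ (BMW.e j)]; noncomm_ring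
    _ = δ * t (m + 2) (V * BMW.e j * BMW.S i) := by
        rw [mul_assoc V, hV.symm.left_comm, ← mul_assoc (BMW.e j), BMW.e_mul_self,
          smul_mul_assoc, mul_smul_comm, ← mul_assoc, map_smul, smul_eq_mul]
    _ = (a : C) * (δ * t (m + 1) (BMW.ιle (Nat.le_succ m) v * BMW.e (Fin.last m))) := by
        rw [ht.trace_e_succ_mul_S, mul_left_comm]

end
end
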